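/- arXiv:1701.07962 — 2 statements merged into one kernel-verified Lean document; each statement's English description precedes it below -/
import Mathlib

section
/- Let T be a compact metric space, X a Hilbert space, ω₁,...,ω_M Lipschitz self-maps of T with Lipschitz constants r_i, and R₁,...,R_M ∈ L(X). Then for every f ∈ C(T,X) and μ ∈ cabv(X), ∫ f d(H(μ)) = ∫ g dμ, where H(μ) = ∑_{i=1}^M R_i ∘ ω_i(μ) and g = ∑_{i=1}^M R_i* ∘ f ∘ ω_i. -/
open MeasureTheory Filter Topology Set

noncomputable section

/-- A finite Borel partition of the whole space. -/
def IsBorelPartition {T : Type*} [MeasurableSpace T] (P : Finset (Set T)) : Prop :=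
  (∀ A ∈ P, MeasurableSet A) ∧ ((P : Set (Set T)).PairwiseDisjoint id) ∧
    ⋃₀ (P : Set (Set T)) = Set.univ

/-- Total variation of a vector measure, as an extended real. -/
def evar {T X : Type*} [MeasurableSpace T] [NormedAddCommGroup X]
    (μ : VectorMeasure T X) : ENNReal :=
  ⨆ (P : Finset (Set T)) (_ : IsBorelPartition P), ∑ A ∈ P, (‖μ A‖₊ : ENNReal)

/-- Bounded variation. -/
def BddVar {T X : Type*} [MeasurableSpace T] [NormedAddCommGroup X]
    (μ : VectorMeasure T X) : Prop := evar μ ≠ ⊤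

/-- The variational norm. -/
def varNorm {T X : Type*} [MeasurableSpace T] [NormedAddCommGroup X]
    (μ : VectorMeasure T X) : ℝ := (evar μ).toReal

/-- Composition of a bounded operator with a vector measure. -/
def opComp {T X Y 𝕜 : Type*} [MeasurableSpace T] [NontriviallyNormedField 𝕜]
    [NormedAddCommGroup X] [NormedSpace 𝕜 X] [NormedAddCommGroup Y] [NormedSpace 𝕜 Y]
    (R : X →L[𝕜] Y) (μ : VectorMeasure T X) : VectorMeasure T Y :=
  μ.mapRange R.toLinearMap.toAddMonoidHom R.continuous

/-- The Markov-type operator generated by operators `R i` and maps `ω i`. -/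
def markovH {T X 𝕜 : Type*} [MeasurableSpace T] [NontriviallyNormedField 𝕜]
    [NormedAddCommGroup X] [NormedSpace 𝕜 X] {M : ℕ}
    (R : Fin M → X →L[𝕜] X) (ω : Fin M → T → T) (μ : VectorMeasure T X) :
    VectorMeasure T X :=
  ∑ i, opComp (R i) (μ.map (ω i))

/-- Simple (finitely-valued, measurable) function. -/
def IsSimpleFn {T X : Type*} [MeasurableSpace T] (g : T → X) : Prop :=
  (Set.range g).Finite ∧ ∀ x : X, MeasurableSet (g ⁻¹' {x})

/-- Integral of a simple function against a vector measure. -/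
def simpleIntegral (𝕜 : Type*) {T X : Type*} [RCLike 𝕜] [MeasurableSpace T]
    [NormedAddCommGroup X] [InnerProductSpace 𝕜 X] (μ : VectorMeasure T X) (g : T → X) : 𝕜 :=
  ∑ᶠ x : X, (inner 𝕜 x (μ (g ⁻¹' {x})) : 𝕜)

/-- `I` is the (uniform, sesquilinear) integral of `f` with respect to `μ`. -/
def HasUIntegral (𝕜 : Type*) {T X : Type*} [RCLike 𝕜] [MeasurableSpace T]
    [NormedAddCommGroup X] [InnerProductSpace 𝕜 X] (μ : VectorMeasure T X)
    (f : T → X) (I : 𝕜) : Prop :=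
  ∀ g : ℕ → T → X, (∀ n, IsSimpleFn (g n)) → TendstoUniformly g f atTop →
    Tendsto (fun n => simpleIntegral 𝕜 μ (g n)) atTop (nhds I)

/-- The uniform integral (defaulting to `0` when it does not exist). -/
def uIntegral (𝕜 : Type*) {T X : Type*} [RCLike 𝕜] [MeasurableSpace T]
    [NormedAddCommGroup X] [InnerProductSpace 𝕜 X] (μ : VectorMeasure T X) (f : T → X) : 𝕜 :=
  letI := Classical.propDecidable
  if h : ∃ I, HasUIntegral 𝕜 μ f I then h.choose else 0

/-- The Monge–Kantorovich norm. -/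
def mkNorm (𝕜 : Type*) {T X : Type*} [RCLike 𝕜] [PseudoMetricSpace T] [MeasurableSpace T]
    [NormedAddCommGroup X] [InnerProductSpace 𝕜 X] (μ : VectorMeasure T X) : ℝ :=
  sSup {s | ∃ (f : T → X) (L : NNReal), LipschitzWith L f ∧ (∀ t, ‖f t‖ + (L : ℝ) ≤ 1) ∧
    s = ‖uIntegral 𝕜 μ f‖}

/-- The modified Monge–Kantorovich norm. -/
def mkNormStar (𝕜 : Type*) {T X : Type*} [RCLike 𝕜] [PseudoMetricSpace T] [MeasurableSpace T]
    [NormedAddCommGroup X] [InnerProductSpace 𝕜 X] (μ : VectorMeasure T X) : ℝ :=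
  sSup {s | ∃ f : T → X, LipschitzWith 1 f ∧ s = ‖uIntegral 𝕜 μ f‖}

/-- The `X`-valued Dirac measure `B ↦ δ_t(B) • x`. -/
def diracVM {T : Type*} [MeasurableSpace T] {𝕜 X : Type*} [RCLike 𝕜]
    [NormedAddCommGroup X] [NormedSpace 𝕜 X] (t : T) (x : X) : VectorMeasure T X :=
  ((Measure.dirac t).toSignedMeasure).mapRange
    { toFun := fun c : ℝ => (c : 𝕜) • x
      map_zero' := by simp
      map_add' := fun a b => by push_cast; rw [add_smul] }
    (RCLike.continuous_ofReal.smul continuous_const)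

end

/-!
For simple `g` the identity is finite algebra: the `H(μ)`-mass of a fibre `g⁻¹{x}` is
`∑ᵢ Rᵢ μ(ωᵢ⁻¹ g⁻¹{x})`, and `⟪x, Rᵢ y⟫ = ⟪Rᵢ* x, y⟫`. Since `|∫ g dν| ≤ ‖g‖_∞ |ν|` for simple
`g`, simple integrals against a measure of bounded variation converge along any uniformly
convergent sequence, to a limit independent of the sequence. Both `μ` and `H(μ)`, whose variation
is at most `∑ᵢ ‖Rᵢ‖ |μ|`, qualify; and if simple `gₙ → f` uniformly, then
`∑ᵢ Rᵢ* ∘ gₙ ∘ ωᵢ → ∑ᵢ Rᵢ* ∘ f ∘ ωᵢ` uniformly.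
-/

open scoped ENNReal InnerProductSpace InnerProduct

theorem tendstoUniformly_finset_sum {ι κ α β : Type*} [AddCommGroup β] [UniformSpace β]
    [IsUniformAddGroup β] {l : Filter ι} {F : κ → ι → α → β} {f : κ → α → β} (s : Finset κ)
    (hF : ∀ k ∈ s, TendstoUniformly (F k) (f k) l) :
    TendstoUniformly (fun n a => ∑ k ∈ s, F k n a) (fun a => ∑ k ∈ s, f k a) l := by
  classical
  induction s using Finset.induction_on with
  | empty => simpa using tendsto_const_nhds.tendstoUniformly_const
  | insert k s hk ih =>
    simp only [Finset.sum_insert hk]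
    exact (hF k (Finset.mem_insert_self k s)).add
      (ih fun j hj => hF j (Finset.mem_insert_of_mem hj))

section SimpleFn

variable {T β γ : Type*} [MeasurableSpace T]

theorem MeasureTheory.SimpleFunc.isSimpleFn (s : SimpleFunc T β) : IsSimpleFn s :=
  ⟨s.finite_range, s.measurableSet_fiber⟩

theorem isSimpleFn_iff {g : T → β} : IsSimpleFn g ↔ ∃ s : SimpleFunc T β, ⇑s = g :=
  ⟨fun hg => ⟨⟨g, hg.2, hg.1⟩, rfl⟩, by rintro ⟨s, rfl⟩; exact s.isSimpleFn⟩

theorem isSimpleFn_const (c : β) : IsSimpleFn fun _ : T => c :=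
  (SimpleFunc.const T c).isSimpleFn

theorem IsSimpleFn.comp_left {g : T → β} (hg : IsSimpleFn g) (φ : β → γ) :
    IsSimpleFn (φ ∘ g) := by
  obtain ⟨s, rfl⟩ := isSimpleFn_iff.1 hg
  exact (s.map φ).isSimpleFn

theorem IsSimpleFn.comp_measurable {S : Type*} [MeasurableSpace S] {g : T → β}
    (hg : IsSimpleFn g) {ω : S → T} (hω : Measurable ω) : IsSimpleFn (g ∘ ω) := by
  obtain ⟨s, rfl⟩ := isSimpleFn_iff.1 hg
  exact (s.comp ω hω).isSimpleFn

theorem IsSimpleFn.prodMk {g : T → β} {h : T → γ} (hg : IsSimpleFn g) (hh : IsSimpleFn h) :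
    IsSimpleFn fun t => (g t, h t) := by
  obtain ⟨s, rfl⟩ := isSimpleFn_iff.1 hg
  obtain ⟨s', rfl⟩ := isSimpleFn_iff.1 hh
  exact (s.pair s').isSimpleFn

theorem IsSimpleFn.add [Add β] {g h : T → β} (hg : IsSimpleFn g) (hh : IsSimpleFn h) :
    IsSimpleFn (g + h) :=
  (hg.prodMk hh).comp_left fun b => b.1 + b.2

theorem IsSimpleFn.neg [Neg β] {g : T → β} (hg : IsSimpleFn g) : IsSimpleFn (-g) :=
  hg.comp_left Neg.neg

theorem IsSimpleFn.sub [Sub β] {g h : T → β} (hg : IsSimpleFn g) (hh : IsSimpleFn h) :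
    IsSimpleFn (g - h) :=
  (hg.prodMk hh).comp_left fun b => b.1 - b.2

theorem IsSimpleFn.finset_sum [AddCommMonoid β] {ι : Type*} (s : Finset ι) {g : ι → T → β}
    (hg : ∀ i ∈ s, IsSimpleFn (g i)) : IsSimpleFn fun t => ∑ i ∈ s, g i t := by
  rw [← Finset.sum_fn]
  exact Finset.sum_induction g IsSimpleFn (fun _ _ => IsSimpleFn.add) (isSimpleFn_const 0) hg

theorem Continuous.exists_seq_simpleFunc_tendstoUniformly [TopologicalSpace T] [CompactSpace T]
    [OpensMeasurableSpace T] [PseudoMetricSpace β] [Zero β] {f : T → β} (hf : Continuous f) :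
    ∃ g : ℕ → SimpleFunc T β, TendstoUniformly (fun n => ⇑(g n)) f atTop := by
  have approx (n : ℕ) : ∃ g : SimpleFunc T β, ∀ t, dist (f t) (g t) < 1 / ((n : ℝ) + 1) := by
    -- `f` is read as a compactly supported function on `T × Unit`
    obtain ⟨g, hg⟩ := (HasCompactSupport.of_compactSpace _).exists_simpleFunc_approx_of_prod
      (hf.comp (continuous_fst (Y := Unit))) Nat.one_div_pos_of_nat
    exact ⟨g.comp _ measurable_prodMk_right, fun t => hg (t, ())⟩
  choose g hg using approx
  refine ⟨g, Metric.tendstoUniformly_iff.2 fun ε hε => ?_⟩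
  filter_upwards [(tendsto_order.1 tendsto_one_div_add_atTop_nhds_zero_nat).2 ε hε] with n hn t
  exact (hg n t).trans hn

end SimpleFn

section Variation

variable {T X : Type*} [MeasurableSpace T] [NormedAddCommGroup X]

theorem IsBorelPartition.sum_nnnorm_le_evar {P : Finset (Set T)} (hP : IsBorelPartition P)
    (μ : VectorMeasure T X) : ∑ A ∈ P, (‖μ A‖₊ : ℝ≥0∞) ≤ evar μ :=
  le_iSup₂ (f := fun P (_ : IsBorelPartition P) => ∑ A ∈ P, (‖μ A‖₊ : ℝ≥0∞)) P hP

theorem isBorelPartition_insert_compl_sUnion {P : Finset (Set T)} (hm : ∀ A ∈ P, MeasurableSet A)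
    (hd : (P : Set (Set T)).PairwiseDisjoint id) :
    IsBorelPartition (insert (⋃₀ (P : Set (Set T)))ᶜ P) := by
  classical
  have hU : MeasurableSet (⋃₀ (P : Set (Set T))) :=
    MeasurableSet.sUnion P.countable_toSet fun A hA => hm A hA
  refine ⟨Finset.forall_mem_insert _ _ _ |>.2 ⟨hU.compl, hm⟩, ?_, ?_⟩
  · rw [Finset.coe_insert]
    exact hd.insert fun A hA _ => disjoint_compl_left.mono_right (subset_sUnion_of_mem hA)
  · rw [Finset.coe_insert, sUnion_insert, compl_union_self]

theorem sum_nnnorm_le_evar (μ : VectorMeasure T X) {ι : Type*} (s : Finset ι) {A : ι → Set T}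
    (hm : ∀ i ∈ s, MeasurableSet (A i)) (hd : (s : Set ι).PairwiseDisjoint A) :
    ∑ i ∈ s, (‖μ (A i)‖₊ : ℝ≥0∞) ≤ evar μ := by
  classical
  rw [← Finset.sum_image_of_disjoint (g := fun B => (‖μ B‖₊ : ℝ≥0∞)) (by simp) hd]
  have hm' : ∀ B ∈ s.image A, MeasurableSet B := by
    simpa only [Finset.forall_mem_image] using hm
  have hd' : ((s.image A : Finset (Set T)) : Set (Set T)).PairwiseDisjoint id := by
    rw [Finset.coe_image]
    rintro _ ⟨i, hi, rfl⟩ _ ⟨j, hj, rfl⟩ hne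
    exact hd hi hj fun h => hne (congrArg A h)
  exact (Finset.sum_le_sum_of_subset (Finset.subset_insert _ _)).trans
    ((isBorelPartition_insert_compl_sUnion hm' hd').sum_nnnorm_le_evar μ)

theorem sum_norm_le_varNorm {μ : VectorMeasure T X} (hμ : BddVar μ) {ι : Type*} (s : Finset ι)
    {A : ι → Set T} (hm : ∀ i ∈ s, MeasurableSet (A i)) (hd : (s : Set ι).PairwiseDisjoint A) :
    ∑ i ∈ s, ‖μ (A i)‖ ≤ varNorm μ := by
  have h := ENNReal.toReal_mono hμ (sum_nnnorm_le_evar μ s hm hd)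
  rwa [ENNReal.toReal_sum fun _ _ => ENNReal.coe_ne_top] at h

theorem evar_zero : evar (0 : VectorMeasure T X) = 0 :=
  le_antisymm (iSup₂_le fun P _ => by simp) zero_le

theorem evar_add_le (ν₁ ν₂ : VectorMeasure T X) : evar (ν₁ + ν₂) ≤ evar ν₁ + evar ν₂ := by
  refine iSup₂_le fun P hP => ?_
  calc ∑ A ∈ P, (‖(ν₁ + ν₂) A‖₊ : ℝ≥0∞)
      ≤ ∑ A ∈ P, ((‖ν₁ A‖₊ : ℝ≥0∞) + ‖ν₂ A‖₊) :=
        Finset.sum_le_sum fun A _ => by exact_mod_cast nnnorm_add_le (ν₁ A) (ν₂ A)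
    _ ≤ evar ν₁ + evar ν₂ := by
        rw [Finset.sum_add_distrib]
        exact add_le_add (hP.sum_nnnorm_le_evar ν₁) (hP.sum_nnnorm_le_evar ν₂)

theorem evar_sum_le {ι : Type*} (s : Finset ι) (ν : ι → VectorMeasure T X) :
    evar (∑ i ∈ s, ν i) ≤ ∑ i ∈ s, evar (ν i) :=
  Finset.le_sum_of_subadditive (M := VectorMeasure T X) (N := ℝ≥0∞) evar evar_zero.le
    evar_add_le s ν

theorem evar_map_le {S : Type*} [MeasurableSpace S] (ν : VectorMeasure T X) {ω : T → S}
    (hω : Measurable ω) : evar (ν.map ω) ≤ evar ν := by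
  refine iSup₂_le fun P hP => ?_
  rw [Finset.sum_congr rfl fun A hA => by rw [VectorMeasure.map_apply ν hω (hP.1 A hA)]]
  exact sum_nnnorm_le_evar ν P (fun A hA => hω (hP.1 A hA))
    fun A hA B hB hAB => (hP.2.1 hA hB hAB).preimage ω

theorem evar_opComp_le {𝕜 Y : Type*} [NontriviallyNormedField 𝕜] [NormedSpace 𝕜 X]
    [NormedAddCommGroup Y] [NormedSpace 𝕜 Y] (R : X →L[𝕜] Y) (ν : VectorMeasure T X) :
    evar (opComp R ν) ≤ ‖R‖₊ * evar ν := by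
  refine iSup₂_le fun P hP => ?_
  calc ∑ A ∈ P, (‖opComp R ν A‖₊ : ℝ≥0∞)
      ≤ ∑ A ∈ P, (‖R‖₊ : ℝ≥0∞) * ‖ν A‖₊ :=
        Finset.sum_le_sum fun A _ => by exact_mod_cast R.le_opNNNorm (ν A)
    _ ≤ ‖R‖₊ * evar ν := by
        rw [← Finset.mul_sum]
        exact mul_le_mul_right (hP.sum_nnnorm_le_evar ν) _

theorem bddVar_markovH {𝕜 : Type*} [NontriviallyNormedField 𝕜] [NormedSpace 𝕜 X] {M : ℕ}
    (R : Fin M → X →L[𝕜] X) {ω : Fin M → T → T} (hω : ∀ i, Measurable (ω i))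
    {μ : VectorMeasure T X} (hμ : BddVar μ) : BddVar (markovH R ω μ) := by
  have hle : evar (markovH R ω μ) ≤ ∑ i, ‖R i‖₊ * evar μ :=
    (evar_sum_le _ _).trans <| Finset.sum_le_sum fun i _ =>
      (evar_opComp_le _ _).trans (mul_le_mul_right (evar_map_le μ (hω i)) _)
  exact ne_top_of_le_ne_top
    (ENNReal.sum_ne_top.2 fun i _ => ENNReal.mul_ne_top ENNReal.coe_ne_top hμ) hle

end Variation

section SimpleIntegral

variable {T 𝕜 X : Type*} [MeasurableSpace T] [RCLike 𝕜] [NormedAddCommGroup X]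
  [InnerProductSpace 𝕜 X]

theorem simpleIntegral_eq_sum (μ : VectorMeasure T X) {g : T → X} {F : Finset X}
    (hF : range g ⊆ F) : simpleIntegral 𝕜 μ g = ∑ x ∈ F, ⟪x, μ (g ⁻¹' {x})⟫_𝕜 := by
  refine finsum_eq_finsetSum_of_support_subset _ fun x hx => ?_
  by_contra hxF
  rw [Function.mem_support, preimage_singleton_eq_empty.2 fun h => hxF (hF h),
    VectorMeasure.empty, inner_zero_right] at hx
  exact hx rfl

theorem simpleIntegral_comp {β : Type*} (μ : VectorMeasure T X) {p : T → β}
    (hp : IsSimpleFn p) (φ : β → X) {B : Finset β} (hB : range p ⊆ B) :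
    simpleIntegral 𝕜 μ (φ ∘ p) = ∑ b ∈ B, ⟪φ b, μ (p ⁻¹' {b})⟫_𝕜 := by
  classical
  have hfiber (x : X) : (φ ∘ p) ⁻¹' {x} = ⋃ b ∈ B.filter (φ · = x), p ⁻¹' {b} := by
    ext t
    simp only [mem_preimage, Function.comp_apply, mem_singleton_iff, mem_iUnion,
      Finset.mem_filter, exists_prop]
    exact ⟨fun h => ⟨p t, ⟨hB (mem_range_self t), h⟩, rfl⟩, by rintro ⟨b, ⟨-, rfl⟩, rfl⟩; rfl⟩
  have hdisj (s : Finset β) : (s : Set β).PairwiseDisjoint fun b => p ⁻¹' {b} :=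
    fun b _ b' _ hne => (disjoint_singleton.2 hne).preimage p
  rw [simpleIntegral_eq_sum μ (F := B.image φ) (by
    rintro _ ⟨t, rfl⟩; exact Finset.mem_image_of_mem φ (hB (mem_range_self t)))]
  refine (Finset.sum_congr rfl fun x _ => ?_).trans
    (Finset.sum_fiberwise_of_maps_to (fun b hb => Finset.mem_image_of_mem φ hb) _)
  rw [hfiber, VectorMeasure.of_biUnion_finset (hdisj _) fun b _ => hp.2 b, inner_sum]
  exact Finset.sum_congr rfl fun b hb => by rw [(Finset.mem_filter.1 hb).2]

theorem simpleIntegral_add (μ : VectorMeasure T X) {g h : T → X} (hg : IsSimpleFn g)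
    (hh : IsSimpleFn h) :
    simpleIntegral 𝕜 μ (g + h) = simpleIntegral 𝕜 μ g + simpleIntegral 𝕜 μ h := by
  have hp := hg.prodMk hh
  have hB := hp.1.coe_toFinset.symm.subset
  have hsum : simpleIntegral 𝕜 μ (g + h) = _ := simpleIntegral_comp μ hp (fun b => b.1 + b.2) hB
  have hfst : simpleIntegral 𝕜 μ g = _ := simpleIntegral_comp μ hp Prod.fst hB
  have hsnd : simpleIntegral 𝕜 μ h = _ := simpleIntegral_comp μ hp Prod.snd hB
  simp only [hsum, hfst, hsnd, inner_add_left, Finset.sum_add_distrib]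

theorem simpleIntegral_neg (μ : VectorMeasure T X) {g : T → X} (hg : IsSimpleFn g) :
    simpleIntegral 𝕜 μ (-g) = -simpleIntegral 𝕜 μ g := by
  have hB := hg.1.coe_toFinset.symm.subset
  have hneg : simpleIntegral 𝕜 μ (-g) = _ := simpleIntegral_comp μ hg Neg.neg hB
  have hid : simpleIntegral 𝕜 μ g = _ := simpleIntegral_comp μ hg id hB
  simp only [hneg, hid, inner_neg_left, Finset.sum_neg_distrib, id]

theorem simpleIntegral_sub (μ : VectorMeasure T X) {g h : T → X} (hg : IsSimpleFn g)
    (hh : IsSimpleFn h) :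
    simpleIntegral 𝕜 μ (g - h) = simpleIntegral 𝕜 μ g - simpleIntegral 𝕜 μ h := by
  rw [sub_eq_add_neg, simpleIntegral_add μ hg hh.neg, simpleIntegral_neg μ hh,
    sub_eq_add_neg]

theorem simpleIntegral_zero (μ : VectorMeasure T X) : simpleIntegral 𝕜 μ (0 : T → X) = 0 := by
  rw [simpleIntegral_eq_sum μ (F := {0}) (by rintro _ ⟨t, rfl⟩; simp), Finset.sum_singleton,
    inner_zero_left]

theorem simpleIntegral_finset_sum (μ : VectorMeasure T X) {ι : Type*} (s : Finset ι)
    {g : ι → T → X} (hg : ∀ i ∈ s, IsSimpleFn (g i)) :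
    simpleIntegral 𝕜 μ (fun t => ∑ i ∈ s, g i t) = ∑ i ∈ s, simpleIntegral 𝕜 μ (g i) := by
  classical
  induction s using Finset.induction_on with
  | empty => exact simpleIntegral_zero μ
  | insert i s hi ih =>
    have hs : ∀ j ∈ s, IsSimpleFn (g j) := fun j hj => hg j (Finset.mem_insert_of_mem hj)
    simp only [Finset.sum_insert hi]
    rw [← ih hs]
    exact simpleIntegral_add μ (hg i (Finset.mem_insert_self i s)) (IsSimpleFn.finset_sum s hs)

theorem simpleIntegral_finset_sum_measure {ι : Type*} (s : Finset ι) (ν : ι → VectorMeasure T X)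
    {g : T → X} (hg : IsSimpleFn g) :
    simpleIntegral 𝕜 (∑ i ∈ s, ν i) g = ∑ i ∈ s, simpleIntegral 𝕜 (ν i) g := by
  have hF := hg.1.coe_toFinset.symm.subset
  simp only [simpleIntegral_eq_sum _ hF, sum_apply, inner_sum]
  exact Finset.sum_comm

theorem simpleIntegral_map {S : Type*} [MeasurableSpace S] (ν : VectorMeasure T X) {ω : T → S}
    (hω : Measurable ω) {g : S → X} (hg : IsSimpleFn g) :
    simpleIntegral 𝕜 (ν.map ω) g = simpleIntegral 𝕜 ν (g ∘ ω) := by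
  have hF := hg.1.coe_toFinset.symm.subset
  rw [simpleIntegral_eq_sum _ hF, simpleIntegral_eq_sum _ ((range_comp_subset_range ω g).trans hF)]
  exact Finset.sum_congr rfl fun x _ => by rw [VectorMeasure.map_apply ν hω (hg.2 x)]; rfl

theorem simpleIntegral_opComp [CompleteSpace X] {Y : Type*} [NormedAddCommGroup Y]
    [InnerProductSpace 𝕜 Y] [CompleteSpace Y] (R : X →L[𝕜] Y) (ν : VectorMeasure T X) {g : T → Y}
    (hg : IsSimpleFn g) : simpleIntegral 𝕜 (opComp R ν) g = simpleIntegral 𝕜 ν (R† ∘ g) := by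
  have hF := hg.1.coe_toFinset.symm.subset
  rw [simpleIntegral_eq_sum _ hF, simpleIntegral_comp ν hg _ hF]
  exact Finset.sum_congr rfl fun x _ => (R.adjoint_inner_left _ x).symm

theorem simpleIntegral_markovH [CompleteSpace X] {M : ℕ} (R : Fin M → X →L[𝕜] X)
    {ω : Fin M → T → T} (hω : ∀ i, Measurable (ω i)) (μ : VectorMeasure T X) {g : T → X}
    (hg : IsSimpleFn g) :
    simpleIntegral 𝕜 (markovH R ω μ) g =
      simpleIntegral 𝕜 μ fun t => ∑ i, ((R i)†) (g (ω i t)) := by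
  rw [markovH, simpleIntegral_finset_sum_measure _ _ hg]
  refine (Finset.sum_congr rfl fun i _ => ?_).trans
    (simpleIntegral_finset_sum μ _ (g := fun i => ⇑((R i)†) ∘ g ∘ ω i)
      fun i _ => (hg.comp_left _).comp_measurable (hω i)).symm
  rw [simpleIntegral_opComp _ _ hg, simpleIntegral_map μ (hω i) (hg.comp_left _)]
  rfl

theorem norm_simpleIntegral_le {μ : VectorMeasure T X} (hμ : BddVar μ) {g : T → X}
    (hg : IsSimpleFn g) {C : ℝ} (hC₀ : 0 ≤ C) (hC : ∀ t, ‖g t‖ ≤ C) :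
    ‖simpleIntegral 𝕜 μ g‖ ≤ C * varNorm μ := by
  have hF := hg.1.coe_toFinset.symm.subset
  rw [simpleIntegral_eq_sum μ hF]
  calc ‖∑ x ∈ hg.1.toFinset, ⟪x, μ (g ⁻¹' {x})⟫_𝕜‖
      ≤ ∑ x ∈ hg.1.toFinset, C * ‖μ (g ⁻¹' {x})‖ := by
        refine (norm_sum_le _ _).trans (Finset.sum_le_sum fun x hx => ?_)
        obtain ⟨t, rfl⟩ := hg.1.mem_toFinset.1 hx
        exact (norm_inner_le_norm _ _).trans (mul_le_mul_of_nonneg_right (hC t) (norm_nonneg _))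
    _ ≤ C * varNorm μ := by
        rw [← Finset.mul_sum]
        exact mul_le_mul_of_nonneg_left (sum_norm_le_varNorm hμ _ (fun x _ => hg.2 x)
          fun x _ y _ hxy => (disjoint_singleton.2 hxy).preimage g) hC₀

theorem tendsto_simpleIntegral_sub {μ : VectorMeasure T X} (hμ : BddVar μ) {ι : Type*}
    {l : Filter ι} {f : T → X} {g h : ι → T → X} (hg : ∀ n, IsSimpleFn (g n))
    (hh : ∀ n, IsSimpleFn (h n)) (hgf : TendstoUniformly g f l) (hhf : TendstoUniformly h f l) :
    Tendsto (fun n => simpleIntegral 𝕜 μ (g n) - simpleIntegral 𝕜 μ (h n)) l (𝓝 0) := by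
  have hdiff : TendstoUniformly (g - h) 0 l := by simpa using hgf.sub hhf
  refine Metric.tendsto_nhds.2 fun ε hε => ?_
  have hV : 0 ≤ varNorm μ := ENNReal.toReal_nonneg
  set δ := ε / (varNorm μ + 1)
  have hδ : 0 < δ := by positivity
  filter_upwards [Metric.tendstoUniformly_iff.1 hdiff δ hδ] with n hn
  rw [dist_zero_right, ← simpleIntegral_sub μ (hg n) (hh n)]
  calc _ ≤ δ * varNorm μ :=
        norm_simpleIntegral_le hμ ((hg n).sub (hh n)) hδ.le fun t => by
          simpa [dist_eq_norm'] using (hn t).le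
    _ < δ * (varNorm μ + 1) := by gcongr; linarith
    _ = ε := div_mul_cancel₀ ε (by positivity)

theorem cauchySeq_simpleIntegral {μ : VectorMeasure T X} (hμ : BddVar μ) {f : T → X}
    {g : ℕ → T → X} (hg : ∀ n, IsSimpleFn (g n)) (hgf : TendstoUniformly g f atTop) :
    CauchySeq fun n => simpleIntegral 𝕜 μ (g n) := by
  rw [cauchySeq_iff_tendsto_dist_atTop_0]
  have hdiff := (tendsto_simpleIntegral_sub (𝕜 := 𝕜) hμ (g := fun n : ℕ × ℕ => g n.1)
    (h := fun n => g n.2) (fun n => hg n.1) (fun n => hg n.2)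
    (fun u hu => tendsto_fst.eventually (hgf u hu))
    (fun u hu => tendsto_snd.eventually (hgf u hu))).norm
  simpa only [dist_eq_norm, norm_zero, prod_atTop_atTop_eq] using hdiff

theorem hasUIntegral_of_tendsto {μ : VectorMeasure T X} (hμ : BddVar μ) {f : T → X}
    {g : ℕ → T → X} (hg : ∀ n, IsSimpleFn (g n)) (hgf : TendstoUniformly g f atTop) {I : 𝕜}
    (hI : Tendsto (fun n => simpleIntegral 𝕜 μ (g n)) atTop (𝓝 I)) : HasUIntegral 𝕜 μ f I := by
  intro h hh hhf
  simpa using (tendsto_simpleIntegral_sub hμ hh hg hhf hgf).add hI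

end SimpleIntegral

/-- change of variable for the Markov-type operator:
`∫ f d(H(μ)) = ∫ g dμ` with `H(μ) = ∑ R_i ∘ ω_i(μ)` and `g = ∑ R_i* ∘ f ∘ ω_i`. -/
theorem change_of_variable_markovH
    {T : Type*} [MetricSpace T] [CompactSpace T] [MeasurableSpace T] [BorelSpace T]
    {𝕜 X : Type*} [RCLike 𝕜] [NormedAddCommGroup X] [InnerProductSpace 𝕜 X] [CompleteSpace X]
    {M : ℕ} (ω : Fin M → T → T) (r : Fin M → NNReal)
    (hω : ∀ i, LipschitzWith (r i) (ω i)) (R : Fin M → X →L[𝕜] X)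
    (μ : VectorMeasure T X) (hμ : BddVar μ) (f : T → X) (hf : Continuous f) :
    ∃ I : 𝕜, HasUIntegral 𝕜 (markovH R ω μ) f I ∧
      HasUIntegral 𝕜 μ (fun t => ∑ i, ContinuousLinearMap.adjoint (R i) (f (ω i t))) I := by
  have hωm (i : Fin M) : Measurable (ω i) := (hω i).continuous.measurable
  have hHμ : BddVar (markovH R ω μ) := bddVar_markovH R hωm hμ
  obtain ⟨g, hgf⟩ := hf.exists_seq_simpleFunc_tendstoUniformly
  have hg (n : ℕ) : IsSimpleFn (g n) := (g n).isSimpleFn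
  obtain ⟨I, hI⟩ := cauchySeq_tendsto_of_complete (cauchySeq_simpleIntegral (𝕜 := 𝕜) hHμ hg hgf)
  refine ⟨I, hasUIntegral_of_tendsto hHμ hg hgf hI, hasUIntegral_of_tendsto hμ
    (g := fun n t => ∑ i, ContinuousLinearMap.adjoint (R i) (g n (ω i t))) (fun n => ?_) ?_ ?_⟩
  · exact IsSimpleFn.finset_sum _ fun i _ => ((hg n).comp_measurable (hωm i)).comp_left _
  · exact tendstoUniformly_finset_sum _ fun i _ =>
      (ContinuousLinearMap.adjoint (R i)).uniformContinuous.comp_tendstoUniformly (hgf.comp (ω i))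
  · simpa only [simpleIntegral_markovH R hωm μ (hg _)] using hI
end

section
/- Let X be a Banach space, t₁,...,t_M distinct points of a compact metric space T, R₁,...,R_M ∈ L(X) with R = ∑ R_i such that Id_X − R is invertible, and μ⁰ ∈ cabv(X). Then the measure μ* = ∑_{i=1}^M δ_{t_i}(R_i ∘ (Id_X − R)^{-1})(μ⁰(T)) + μ⁰ satisfies μ*(T) = (Id_X − R)^{-1}(μ⁰(T)) and is a fixed point of H₂(μ) = ∑_{i=1}^M δ_{t_i} R_i(μ(T)) + μ⁰, i.e. H₂(μ*) = μ*. -/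
open MeasureTheory Filter Topology Set

theorem Ring.inverse_one_sub_eq_one_add_mul {A : Type*} [Ring A] {s : A} (h : IsUnit (1 - s)) :
    Ring.inverse (1 - s) = 1 + s * Ring.inverse (1 - s) := by
  have h' := Ring.mul_inverse_cancel _ h
  rwa [sub_mul, one_mul, sub_eq_iff_eq_add] at h'

theorem diracVM_apply_univ {T : Type*} [MeasurableSpace T] {𝕜 X : Type*} [RCLike 𝕜]
    [NormedAddCommGroup X] [NormedSpace 𝕜 X] (t : T) (x : X) :
    diracVM (𝕜 := 𝕜) t x univ = x := by
  simp [diracVM, VectorMeasure.mapRange_apply,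
    Measure.toSignedMeasure_apply_measurable MeasurableSet.univ]

theorem sum_diracVM_add_apply_univ {T : Type*} [MeasurableSpace T] {𝕜 X : Type*} [RCLike 𝕜]
    [NormedAddCommGroup X] [NormedSpace 𝕜 X] {ι : Type*} (s : Finset ι) (t : ι → T) (x : ι → X)
    (ν : VectorMeasure T X) :
    (∑ i ∈ s, diracVM (𝕜 := 𝕜) (t i) (x i) + ν) univ = ∑ i ∈ s, x i + ν univ := by
  simp [diracVM_apply_univ]

theorem constant_maps_explicit_fixed_point_general
    {T : Type*} [MeasurableSpace T]
    {𝕜 X : Type*} [RCLike 𝕜] [NormedAddCommGroup X] [NormedSpace 𝕜 X]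
    {M : ℕ} (t : Fin M → T)
    (R : Fin M → X →L[𝕜] X)
    (hinv : IsUnit ((1 : X →L[𝕜] X) - ∑ i, R i))
    (μ0 : VectorMeasure T X) :
    ∀ μs : VectorMeasure T X,
      μs = ∑ i, diracVM (𝕜 := 𝕜) (t i)
          ((R i) ((Ring.inverse ((1 : X →L[𝕜] X) - ∑ j, R j)) (μ0 Set.univ))) + μ0 →
      μs Set.univ = (Ring.inverse ((1 : X →L[𝕜] X) - ∑ j, R j)) (μ0 Set.univ) ∧
      ∑ i, diracVM (𝕜 := 𝕜) (t i) ((R i) (μs Set.univ)) + μ0 = μs := by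
  intro μs hμs
  have htotal : μs univ = Ring.inverse (1 - ∑ j, R j) (μ0 univ) := by
    rw [hμs, sum_diracVM_add_apply_univ, ← sum_apply]
    conv_rhs => rw [Ring.inverse_one_sub_eq_one_add_mul hinv]
    rw [add_apply, mul_apply_eq_comp, one_apply_eq_self, add_comm]
  exact ⟨htotal, by rw [htotal, hμs]⟩

/-- if `Id − R` is invertible (`R = ∑ R_i`), then
`μ* = ∑ δ_{t_i}(R_i ∘ (Id − R)⁻¹)(μ⁰(T)) + μ⁰` satisfies
`μ*(T) = (Id − R)⁻¹(μ⁰(T))` and is a fixed point of `H₂`. -/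
theorem constant_maps_explicit_fixed_point
    {T : Type*} [MetricSpace T] [CompactSpace T] [MeasurableSpace T] [BorelSpace T]
    {𝕜 X : Type*} [RCLike 𝕜] [NormedAddCommGroup X] [NormedSpace 𝕜 X] [CompleteSpace X]
    {M : ℕ} (t : Fin M → T) (ht : Function.Injective t)
    (R : Fin M → X →L[𝕜] X)
    (hinv : IsUnit ((1 : X →L[𝕜] X) - ∑ i, R i))
    (μ0 : VectorMeasure T X) (hμ0 : BddVar μ0) :
    ∀ μs : VectorMeasure T X,
      μs = ∑ i, diracVM (𝕜 := 𝕜) (t i)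
          ((R i) ((Ring.inverse ((1 : X →L[𝕜] X) - ∑ j, R j)) (μ0 Set.univ))) + μ0 →
      μs Set.univ = (Ring.inverse ((1 : X →L[𝕜] X) - ∑ j, R j)) (μ0 Set.univ) ∧
      ∑ i, diracVM (𝕜 := 𝕜) (t i) ((R i) (μs Set.univ)) + μ0 = μs :=
  constant_maps_explicit_fixed_point_general t R hinv μ0
end
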